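/- In the discrete stochastic SIR model, the sequence (I_k, S_k)_{k∈ℕ} is a homogeneous Markov chain with respect to the filtration 𝓕_k := σ((S_j, I_j) : j ≤ k): for every k ∈ ℕ and every bounded measurable function f : ℝ² → ℝ, 𝔼[f(I_{k+1}, S_{k+1}) | 𝓕_k] = F_f(I_k, S_k) almost surely, where F_f(l, m) := Σ_{u,w} f(l + u − w, m − u) · ℙ(Bin(m, 1 − e^{−λlh}) = u) · ℙ(Bin(l, 1 − e^{−γh}) = w), with Bin(n, p) denoting a binomial random variable with parameters n and p; in particular the conditional law of (I_{k+1}, S_{k+1}) given 𝓕_k depends only on (I_k, S_k) and not on k. -/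

import Mathlib

open MeasureTheory ProbabilityTheory Filter Real

/-- The filtration `𝓕_k = σ((S_j, I_j) : j ≤ k)` generated by the susceptible and infectious
counts up to time `k`. -/
def sirFiltration {Ω : Type*} (S I : ℕ → Ω → ℕ) (k : ℕ) : MeasurableSpace Ω :=
  ⨆ j ∈ Finset.range (k + 1),
    MeasurableSpace.comap (fun ω => (S j ω, I j ω)) inferInstance

/-- The discrete stochastic SIR model on one node with total population `N`, time step `h > 0`
and parameters `λ ≥ 0` (infection), `γ > 0` (recovery).  `S, I, R` are the susceptible,
infectious and recovered counts; `X k i` and `Y k i` are the `{0,1}`-valued infection and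
recovery indicators used in the step from time `k` to `k+1`.  Conditionally on
`𝓕_k = σ((S_j, I_j) : j ≤ k)`, the combined family `(X k i)_i, (Y k i)_i` is independent,
each `X k i` being Bernoulli of parameter `1 - e^{-λ I_k h}` and each `Y k i` Bernoulli of
parameter `1 - e^{-γ h}`; this is expressed by the product form of the conditional
probability of every joint configuration of values.  The initial values are deterministic. -/
def IsSIRModel {Ω : Type*} [MeasurableSpace Ω] (μ : Measure Ω)
    (N : ℕ) (h lam gam : ℝ)
    (S I R : ℕ → Ω → ℕ) (X Y : ℕ → ℕ → Ω → ℕ) : Prop :=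
  IsProbabilityMeasure μ ∧
  0 < h ∧ 0 ≤ lam ∧ 0 < gam ∧
  (∀ k ω, S k ω + I k ω + R k ω = N) ∧
  (∀ k i ω, X k i ω ≤ 1) ∧
  (∀ k i ω, Y k i ω ≤ 1) ∧
  (∀ k, Measurable (S k)) ∧ (∀ k, Measurable (I k)) ∧ (∀ k, Measurable (R k)) ∧
  (∀ k i, Measurable (X k i)) ∧ (∀ k i, Measurable (Y k i)) ∧
  (∀ ω ω', S 0 ω = S 0 ω' ∧ I 0 ω = I 0 ω' ∧ R 0 ω = R 0 ω') ∧
  (∀ k ω, S (k + 1) ω + (∑ i ∈ Finset.range (S k ω), X k i ω) = S k ω) ∧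
  (∀ k ω, I (k + 1) ω + (∑ i ∈ Finset.range (I k ω), Y k i ω)
      = I k ω + ∑ i ∈ Finset.range (S k ω), X k i ω) ∧
  (∀ k ω, R (k + 1) ω = R k ω + ∑ i ∈ Finset.range (I k ω), Y k i ω) ∧
  (∀ k : ℕ, ∀ a b : ℕ → ℕ, (∀ i, a i ≤ 1) → (∀ i, b i ≤ 1) →
    μ[Set.indicator {ω | ∀ i < N, X k i ω = a i ∧ Y k i ω = b i} (fun _ => (1 : ℝ))
        | sirFiltration S I k]
      =ᵐ[μ] fun ω =>
        (∏ i ∈ Finset.range N,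
          (if a i = 1 then 1 - exp (-(lam * (I k ω : ℝ) * h))
            else exp (-(lam * (I k ω : ℝ) * h)))) *
        (∏ i ∈ Finset.range N,
          (if b i = 1 then 1 - exp (-(gam * h)) else exp (-(gam * h)))))

/-- The probability mass function of the binomial distribution with parameters `n` and `p`:
`ℙ(Bin(n, p) = u) = C(n, u) p^u (1-p)^{n-u}`. -/
noncomputable def binPMF (n : ℕ) (p : ℝ) (u : ℕ) : ℝ :=
  (n.choose u : ℝ) * p ^ u * (1 - p) ^ (n - u)

/-!
Write `A_k, B_k ⊆ {0, …, N-1}` for the sets of indices `i` with `X_i^{(k)} = 1` and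
`Y_i^{(k)} = 1`. Then `(I_{k+1}, S_{k+1})` is a deterministic function of `(S_k, I_k)` and
`(A_k, B_k)`, so `f(I_{k+1}, S_{k+1})` is a finite sum over configurations `(A, B)` of an
`𝓕_k`-measurable factor times `𝟙{(A_k, B_k) = (A, B)}`. Pulling the factors out of the
conditional expectation leaves the conditional probabilities of the configurations, which are
products of Bernoulli weights by hypothesis. Only `#(A ∩ [0, S_k))` and `#(B ∩ [0, I_k))`
matter, and summing the Bernoulli weights over the configurations with given counts yields the
binomial probabilities.
-/

open Finset

section BernoulliWeight

variable {α : Type*} [DecidableEq α]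

def bernoulliWeight (p : ℝ) (c A : Finset α) : ℝ :=
  ∏ i ∈ c, if i ∈ A then p else 1 - p

theorem bernoulliWeight_eq_pow_mul_pow {c A : Finset α} (hA : A ⊆ c) (p : ℝ) :
    bernoulliWeight p c A = p ^ #A * (1 - p) ^ (#c - #A) := by
  rw [bernoulliWeight, prod_ite, prod_const, prod_const, filter_mem_eq_inter,
    inter_eq_right.mpr hA, filter_notMem_eq_sdiff, card_sdiff_of_subset hA]

theorem bernoulliWeight_insert_of_notMem {c A : Finset α} {a : α} (ha : a ∉ c) (hA : A ⊆ c)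
    (p : ℝ) : bernoulliWeight p (insert a c) A = (1 - p) * bernoulliWeight p c A := by
  rw [bernoulliWeight, prod_insert ha, if_neg fun h => ha (hA h), bernoulliWeight]

theorem bernoulliWeight_insert_insert {c A : Finset α} {a : α} (ha : a ∉ c) (p : ℝ) :
    bernoulliWeight p (insert a c) (insert a A) = p * bernoulliWeight p c A := by
  rw [bernoulliWeight, prod_insert ha, if_pos (mem_insert_self a A), bernoulliWeight]
  congr 1
  refine prod_congr rfl fun i hi => ?_
  simp [ne_of_mem_of_not_mem hi ha]

theorem sum_powerset_mul_bernoulliWeight {t c : Finset α} (htc : t ⊆ c) (p : ℝ) (F : ℕ → ℝ) :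
    ∑ A ∈ c.powerset, F #(A ∩ t) * bernoulliWeight p c A
      = ∑ u ∈ range (#t + 1), F u * binPMF #t p u := by
  suffices key : ∀ d : Finset α, Disjoint t d →
      ∑ A ∈ (t ∪ d).powerset, F #(A ∩ t) * bernoulliWeight p (t ∪ d) A
        = ∑ u ∈ range (#t + 1), F u * binPMF #t p u by
    simpa [union_sdiff_of_subset htc] using key (c \ t) disjoint_sdiff
  intro d
  induction d using Finset.induction_on with
  | empty =>
    intro _
    rw [union_empty]
    calc ∑ A ∈ t.powerset, F #(A ∩ t) * bernoulliWeight p t A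
        = ∑ A ∈ t.powerset, F #A * p ^ #A * (1 - p) ^ (#t - #A) := by
          refine sum_congr rfl fun A hA => ?_
          rw [inter_eq_left.mpr (mem_powerset.mp hA),
            bernoulliWeight_eq_pow_mul_pow (mem_powerset.mp hA), mul_assoc]
      _ = ∑ u ∈ range (#t + 1), F u * binPMF #t p u := by
          rw [sum_powerset_apply_card (fun u => F u * p ^ u * (1 - p) ^ (#t - u))]
          refine sum_congr rfl fun u _ => ?_
          rw [nsmul_eq_mul, binPMF]
          ring
  | insert a d had ih =>
    intro htd
    have hat : a ∉ t := fun h => disjoint_left.mp htd h (mem_insert_self a d)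
    have ha : a ∉ t ∪ d := by simp [hat, had]
    rw [union_insert, sum_powerset_insert ha, ← ih (disjoint_of_subset_right
      (subset_insert a d) htd), ← sum_add_distrib]
    refine sum_congr rfl fun A hA => ?_
    rw [insert_inter_of_notMem hat, bernoulliWeight_insert_of_notMem ha (mem_powerset.mp hA),
      bernoulliWeight_insert_insert ha]
    ring

theorem sum_powerset_product_mul_bernoulliWeight {t t' c : Finset α} (ht : t ⊆ c) (ht' : t' ⊆ c)
    (p q : ℝ) (F : ℕ → ℕ → ℝ) :
    ∑ AB ∈ c.powerset ×ˢ c.powerset,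
        F #(AB.1 ∩ t) #(AB.2 ∩ t') * (bernoulliWeight p c AB.1 * bernoulliWeight q c AB.2)
      = ∑ u ∈ range (#t + 1), ∑ w ∈ range (#t' + 1),
          F u w * binPMF #t p u * binPMF #t' q w := by
  simp_rw [sum_product, mul_comm (bernoulliWeight p c _), ← mul_assoc, ← sum_mul,
    sum_powerset_mul_bernoulliWeight ht']
  refine (sum_powerset_mul_bernoulliWeight ht p
    fun u => ∑ w ∈ range (#t' + 1), F u w * binPMF #t' q w).trans ?_
  refine sum_congr rfl fun u _ => ?_
  rw [sum_mul]
  refine sum_congr rfl fun w _ => ?_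
  ring

end BernoulliWeight

section CondExp

variable {Ω ι : Type*} {m m₀ : MeasurableSpace Ω} {μ : Measure Ω} [IsFiniteMeasure μ]

theorem condExp_comp_eq_sum_mul_condExp_indicator (hm : m ≤ m₀) {Z : Ω → ι} {s : Finset ι}
    (hZs : ∀ ω, Z ω ∈ s) (hZ : ∀ i ∈ s, MeasurableSet[m₀] (Z ⁻¹' {i}))
    {g : ι → Ω → ℝ} (hg : ∀ i, StronglyMeasurable[m] (g i)) {C : ℝ} (hC : ∀ i ω, |g i ω| ≤ C) :
    μ[fun ω => g (Z ω) ω | m] =ᵐ[μ]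
      fun ω => ∑ i ∈ s, g i ω * μ[(Z ⁻¹' {i}).indicator (fun _ => (1 : ℝ)) | m] ω := by
  have hdecomp : (fun ω => g (Z ω) ω)
      = ∑ i ∈ s, g i * (Z ⁻¹' {i}).indicator (fun _ => (1 : ℝ)) := by
    funext ω
    rw [Finset.sum_apply, sum_eq_single_of_mem (Z ω) (hZs ω) fun i _ hi => ?_]
    · simp
    · simp [Ne.symm hi]
  have hint : ∀ i ∈ s, Integrable (g i * (Z ⁻¹' {i}).indicator (fun _ => (1 : ℝ))) μ :=
    fun i hi => ((integrable_const 1).indicator (hZ i hi)).bdd_mul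
      ((hg i).mono hm).aestronglyMeasurable (ae_of_all _ (hC i))
  rw [hdecomp]
  refine (condExp_finsetSum hint _).trans ?_
  refine (eventuallyEq_sum fun i hi => condExp_mul_of_stronglyMeasurable_left (hg i) (hint i hi)
    ((integrable_const 1).indicator (hZ i hi))).trans ?_
  filter_upwards with ω
  simp [Finset.sum_apply]

end CondExp

theorem filter_eq_one_eq_iff {x : ℕ → ℕ} (hx : ∀ i, x i ≤ 1) {N : ℕ} {A : Finset ℕ}
    (hA : A ⊆ range N) :
    (range N).filter (fun i => x i = 1) = A ↔ ∀ i < N, x i = if i ∈ A then 1 else 0 := by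
  constructor
  · rintro rfl i hi
    rcases Nat.le_one_iff_eq_zero_or_eq_one.mp (hx i) with h | h <;> simp [h, hi]
  · intro h
    ext i
    by_cases hi : i < N
    · have hxi := h i hi
      split_ifs at hxi with hiA <;> simp [hi, hiA, hxi]
    · simp only [mem_filter, mem_range, hi, false_and, false_iff]
      exact fun hiA => hi (mem_range.mp (hA hiA))

theorem card_filter_eq_one_inter_range {x : ℕ → ℕ} (hx : ∀ i, x i ≤ 1) {s N : ℕ} (hs : s ≤ N) :
    #((range N).filter (fun i => x i = 1) ∩ range s) = ∑ i ∈ range s, x i := by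
  rw [filter_inter, inter_eq_right.mpr (range_subset_range.mpr hs), card_filter]
  refine sum_congr rfl fun i _ => ?_
  rcases Nat.le_one_iff_eq_zero_or_eq_one.mp (hx i) with h | h <;> simp [h]

/-- The sets of individuals that get infected, resp. recover, in the step from `k` to `k + 1`. -/
def sirJumpSets {Ω : Type*} (X Y : ℕ → ℕ → Ω → ℕ) (N k : ℕ) (ω : Ω) : Finset ℕ × Finset ℕ :=
  ((range N).filter (fun i => X k i ω = 1), (range N).filter (fun i => Y k i ω = 1))

/-- The state `(I, S)` reached from `S = s`, `I = l` when the individuals in `AB.1` get infected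
and those in `AB.2` recover; only indices below `s`, resp. `l`, are used. -/
def sirNextState (AB : Finset ℕ × Finset ℕ) (s l : ℕ) : ℝ × ℝ :=
  ((l : ℝ) + #(AB.1 ∩ range s) - #(AB.2 ∩ range l), (s : ℝ) - #(AB.1 ∩ range s))

theorem measurable_sirFiltration_pair {Ω : Type*} (S I : ℕ → Ω → ℕ) (k : ℕ) :
    Measurable[sirFiltration S I k] fun ω => (S k ω, I k ω) :=
  (comap_measurable _).mono
    (le_iSup₂ (f := fun j (_ : j ∈ range (k + 1)) =>
      MeasurableSpace.comap (fun ω => (S j ω, I j ω)) inferInstance) k (self_mem_range_succ k))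
    le_rfl

namespace IsSIRModel

variable {Ω : Type*} [MeasurableSpace Ω] {μ : Measure Ω} {N : ℕ} {h lam gam : ℝ}
  {S I R : ℕ → Ω → ℕ} {X Y : ℕ → ℕ → Ω → ℕ} (hM : IsSIRModel μ N h lam gam S I R X Y)
include hM

theorem le_N (k : ℕ) (ω : Ω) : S k ω ≤ N ∧ I k ω ≤ N := by
  obtain ⟨-, -, -, -, hsum, -⟩ := hM
  have := hsum k ω
  omega

theorem sirFiltration_le (k : ℕ) : sirFiltration S I k ≤ ‹MeasurableSpace Ω› := by
  obtain ⟨-, -, -, -, -, -, -, hSm, hIm, -⟩ := hM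
  exact iSup₂_le fun j _ => ((hSm j).prodMk (hIm j)).comap_le

theorem next_eq_sirNextState (k : ℕ) (ω : Ω) :
    ((I (k + 1) ω : ℝ), (S (k + 1) ω : ℝ))
      = sirNextState (sirJumpSets X Y N k ω) (S k ω) (I k ω) := by
  have hle := hM.le_N k ω
  obtain ⟨-, -, -, -, -, hX, hY, -, -, -, -, -, -, hS, hI, -⟩ := hM
  have hS := congrArg (Nat.cast : ℕ → ℝ) (hS k ω)
  have hI := congrArg (Nat.cast : ℕ → ℝ) (hI k ω)
  push_cast at hS hI
  rw [sirNextState, sirJumpSets,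
    card_filter_eq_one_inter_range (fun i => hX k i ω) hle.1,
    card_filter_eq_one_inter_range (fun i => hY k i ω) hle.2]
  push_cast
  ext <;> simp only <;> linarith

theorem sirJumpSets_preimage {k : ℕ} {A B : Finset ℕ} (hA : A ⊆ range N) (hB : B ⊆ range N) :
    sirJumpSets X Y N k ⁻¹' {(A, B)}
      = {ω | ∀ i < N, X k i ω = (if i ∈ A then 1 else 0) ∧ Y k i ω = (if i ∈ B then 1 else 0)} := by
  obtain ⟨-, -, -, -, -, hX, hY, -⟩ := hM
  ext ω
  simp only [Set.mem_preimage, Set.mem_singleton_iff, sirJumpSets, Prod.mk.injEq,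
    filter_eq_one_eq_iff (fun i => hX k i ω) hA, filter_eq_one_eq_iff (fun i => hY k i ω) hB,
    Set.mem_ofPred_eq, forall₂_and]

theorem measurableSet_sirJumpSets_preimage {k : ℕ} {A B : Finset ℕ} (hA : A ⊆ range N)
    (hB : B ⊆ range N) : MeasurableSet (sirJumpSets X Y N k ⁻¹' {(A, B)}) := by
  rw [hM.sirJumpSets_preimage hA hB]
  obtain ⟨-, -, -, -, -, -, -, -, -, -, hXm, hYm, -⟩ := hM
  measurability

theorem condExp_indicator_sirJumpSets_preimage {k : ℕ} {A B : Finset ℕ} (hA : A ⊆ range N)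
    (hB : B ⊆ range N) :
    μ[(sirJumpSets X Y N k ⁻¹' {(A, B)}).indicator (fun _ => (1 : ℝ)) | sirFiltration S I k]
      =ᵐ[μ] fun ω => bernoulliWeight (1 - exp (-(lam * (I k ω : ℝ) * h))) (range N) A
        * bernoulliWeight (1 - exp (-(gam * h))) (range N) B := by
  rw [hM.sirJumpSets_preimage hA hB]
  obtain ⟨-, -, -, -, -, -, -, -, -, -, -, -, -, -, -, -, hcond⟩ := hM
  filter_upwards [hcond k (fun i => if i ∈ A then 1 else 0) (fun i => if i ∈ B then 1 else 0)
    (fun i => by split_ifs <;> simp) (fun i => by split_ifs <;> simp)] with ω hω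
  simp [hω, bernoulliWeight]

end IsSIRModel

/-- In the discrete stochastic SIR model, `(I_k, S_k)` is a homogeneous
Markov chain for the filtration `𝓕_k`: for every `k` and every bounded measurable
`f : ℝ × ℝ → ℝ`, almost surely
`𝔼[f(I_{k+1}, S_{k+1}) | 𝓕_k] = F_f(I_k, S_k)`, where
`F_f(l, m) = ∑_{u ≤ m} ∑_{w ≤ l} f(l + u - w, m - u) ℙ(Bin(m, 1 - e^{-λlh}) = u)
  ℙ(Bin(l, 1 - e^{-γh}) = w)`;
in particular the conditional law of `(I_{k+1}, S_{k+1})` given `𝓕_k` is a fixed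
(`k`-independent) function of `(I_k, S_k)`. -/
theorem sir_markov_property
    {Ω : Type*} [MeasurableSpace Ω] (μ : Measure Ω)
    (N : ℕ) (h lam gam : ℝ)
    (S I R : ℕ → Ω → ℕ) (X Y : ℕ → ℕ → Ω → ℕ)
    (hM : IsSIRModel μ N h lam gam S I R X Y) :
    ∀ k : ℕ, ∀ f : ℝ × ℝ → ℝ, Measurable f → (∃ C : ℝ, ∀ p, |f p| ≤ C) →
      μ[fun ω => f ((I (k + 1) ω : ℝ), (S (k + 1) ω : ℝ)) | sirFiltration S I k]
        =ᵐ[μ] fun ω =>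
          ∑ u ∈ Finset.range (S k ω + 1), ∑ w ∈ Finset.range (I k ω + 1),
            f ((I k ω : ℝ) + u - w, (S k ω : ℝ) - u)
              * binPMF (S k ω) (1 - Real.exp (-(lam * (I k ω : ℝ) * h))) u
              * binPMF (I k ω) (1 - Real.exp (-(gam * h))) w := by
  rintro k f - ⟨C, hC⟩
  have : IsProbabilityMeasure μ := hM.1
  set P := (range N).powerset ×ˢ (range N).powerset
  have hjump : ∀ ω, sirJumpSets X Y N k ω ∈ P := fun ω => by
    simp [P, sirJumpSets, filter_subset]
  have hP : ∀ AB ∈ P, AB.1 ⊆ range N ∧ AB.2 ⊆ range N := fun AB hAB => by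
    simpa [P] using hAB
  simp_rw [hM.next_eq_sirNextState k]
  refine (condExp_comp_eq_sum_mul_condExp_indicator (hM.sirFiltration_le k) hjump
    (fun AB hAB => hM.measurableSet_sirJumpSets_preimage (hP AB hAB).1 (hP AB hAB).2)
    (g := fun AB ω => f (sirNextState AB (S k ω) (I k ω)))
    (fun AB => ((measurable_of_countable fun q : ℕ × ℕ => f (sirNextState AB q.1 q.2)).comp
      (measurable_sirFiltration_pair S I k)).stronglyMeasurable)
    (fun _ _ => hC _)).trans ?_
  have hweights := (eventually_all_finset P).mpr fun AB hAB =>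
    hM.condExp_indicator_sirJumpSets_preimage (k := k) (hP AB hAB).1 (hP AB hAB).2
  filter_upwards [hweights] with ω hω
  rw [sum_congr rfl fun AB hAB => by rw [hω AB hAB]]
  simpa [sirNextState] using sum_powerset_product_mul_bernoulliWeight
    (range_subset_range.mpr (hM.le_N k ω).1) (range_subset_range.mpr (hM.le_N k ω).2)
    (1 - exp (-(lam * (I k ω : ℝ) * h))) (1 - exp (-(gam * h)))
    fun u w => f ((I k ω : ℝ) + u - w, (S k ω : ℝ) - u)
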